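/- Lipschitz dependence of box-constrained QP minimizers on the box upper bound: Let A ∈ ℝ^{J×J} be symmetric positive definite and ρ ∈ ℝ^J. For x ≥ 0 let y(x) denote the unique minimizer of (1/2)yᵀAy + ρᵀy over [0,x]. Then there exists a constant L (depending only on A) such that ‖y(x) − y(x')‖ ≤ L‖x − x'‖ for all x, x' ≥ 0. -/

import Mathlib

open Matrix

/-- Euclidean norm of a vector in `ℝ^J`. -/
noncomputable def sqnorm {J : ℕ} (v : Fin J → ℝ) : ℝ := Real.sqrt (∑ i, (v i)^2)

/-!
With `g = A y + ρ`, minimality of `y` on the box `[0, x]` gives the first-order conditions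
`g i ≥ 0` where `y i < x i` and `g i ≤ 0` where `0 < y i`. Comparing these conditions for two
minimizers coordinatewise yields `(y i - y' i) (g i - g' i) ≤ |x i - x' i| |g i - g' i|`, and
`g - g' = A (y - y')`. Summing, coercivity `μ ‖d‖² ≤ dᵀ A d` and Cauchy–Schwarz give, for
`d = y - y'`, `μ ‖d‖² ≤ ‖x - x'‖ ‖A‖ ‖d‖`, so `L = ‖A‖ / μ` works.
-/

open Set Filter Topology

theorem exists_pos_mul_norm_sq_le {E : Type*} [NormedAddCommGroup E] [NormedSpace ℝ E]
    [FiniteDimensional ℝ E] {Q : E → ℝ} (hQc : Continuous Q) (hQpos : ∀ v ≠ 0, 0 < Q v)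
    (hQsmul : ∀ (c : ℝ) v, Q (c • v) = c ^ 2 * Q v) :
    ∃ μ > 0, ∀ v, μ * ‖v‖ ^ 2 ≤ Q v := by
  have hQ0 : Q 0 = 0 := by simpa using hQsmul 0 0
  rcases subsingleton_or_nontrivial E with hE | hE
  · exact ⟨1, one_pos, fun v => by simp [Subsingleton.elim v 0, hQ0]⟩
  obtain ⟨w, hw, hmin⟩ := (isCompact_sphere (0 : E) 1).exists_isMinOn
    (NormedSpace.sphere_nonempty.2 zero_le_one) hQc.continuousOn
  refine ⟨Q w, hQpos w (ne_zero_of_mem_unit_sphere ⟨w, hw⟩), fun v => ?_⟩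
  rcases eq_or_ne v 0 with rfl | hv
  · simp [hQ0]
  have hunit : ‖v‖⁻¹ • v ∈ Metric.sphere (0 : E) 1 := by simp [norm_smul, hv]
  calc Q w * ‖v‖ ^ 2 ≤ Q (‖v‖⁻¹ • v) * ‖v‖ ^ 2 := by gcongr; exact hmin hunit
    _ = Q v := by rw [hQsmul]; field_simp

section Sqnorm

variable {J : ℕ}

theorem sqnorm_nonneg (v : Fin J → ℝ) : 0 ≤ sqnorm v := Real.sqrt_nonneg _

theorem sqnorm_eq_norm_toLp (v : Fin J → ℝ) : sqnorm v = ‖WithLp.toLp 2 v‖ := by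
  simp [sqnorm, EuclideanSpace.norm_eq]

theorem Matrix.PosDef.exists_pos_mul_sqnorm_sq_le {A : Matrix (Fin J) (Fin J) ℝ}
    (hA : A.PosDef) : ∃ μ > 0, ∀ v, μ * sqnorm v ^ 2 ≤ v ⬝ᵥ A *ᵥ v := by
  have hpos : ∀ v : EuclideanSpace ℝ (Fin J), v ≠ 0 → 0 < v.ofLp ⬝ᵥ A *ᵥ v.ofLp := fun v hv => by
    simpa using hA.dotProduct_mulVec_pos (x := v.ofLp) (by simpa using hv)
  have hsmul : ∀ (c : ℝ) (v : EuclideanSpace ℝ (Fin J)),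
      (c • v).ofLp ⬝ᵥ A *ᵥ (c • v).ofLp = c ^ 2 * (v.ofLp ⬝ᵥ A *ᵥ v.ofLp) := fun c v => by
    simp [mulVec_smul]; ring
  obtain ⟨μ, hμ, hQ⟩ := exists_pos_mul_norm_sq_le (by fun_prop) hpos hsmul
  exact ⟨μ, hμ, fun v => by simpa [sqnorm_eq_norm_toLp] using hQ (WithLp.toLp 2 v)⟩

theorem sqnorm_mulVec_le (A : Matrix (Fin J) (Fin J) ℝ) (v : Fin J → ℝ) :
    sqnorm (A *ᵥ v) ≤ ‖toEuclideanCLM (𝕜 := ℝ) A‖ * sqnorm v := by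
  simpa [sqnorm_eq_norm_toLp] using (toEuclideanCLM (𝕜 := ℝ) A).le_opNorm (WithLp.toLp 2 v)

theorem sum_abs_mul_abs_le_sqnorm_mul_sqnorm (u v : Fin J → ℝ) :
    ∑ i, |u i| * |v i| ≤ sqnorm u * sqnorm v := by
  simpa [sqnorm, sq_abs] using
    Real.sum_mul_le_sqrt_mul_sqrt Finset.univ (fun i => |u i|) (fun i => |v i|)

end Sqnorm

section BoxQP

variable {n : Type*}

theorem add_smul_single_mem_Icc [DecidableEq n] {l u y : n → ℝ} (hy : y ∈ Icc l u) {i : n}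
    {t : ℝ} (hl : l i ≤ y i + t) (hu : y i + t ≤ u i) : y + t • Pi.single i 1 ∈ Icc l u := by
  constructor <;> intro j <;> rcases eq_or_ne j i with rfl | hj <;>
    simp [*, hy.1 j, hy.2 j]

variable [Fintype n]

noncomputable def quadObjective (A : Matrix n n ℝ) (ρ z : n → ℝ) : ℝ :=
  1 / 2 * (z ⬝ᵥ A *ᵥ z) + ρ ⬝ᵥ z

theorem Matrix.IsSymm.dotProduct_mulVec_comm {A : Matrix n n ℝ} (hA : A.IsSymm) (v w : n → ℝ) :
    v ⬝ᵥ A *ᵥ w = w ⬝ᵥ A *ᵥ v := by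
  rw [dotProduct_mulVec, ← mulVec_transpose, hA.eq, dotProduct_comm]

theorem quadObjective_add_smul {A : Matrix n n ℝ} (hA : A.IsSymm) (ρ y v : n → ℝ) (t : ℝ) :
    quadObjective A ρ (y + t • v) =
      quadObjective A ρ y + t * (v ⬝ᵥ (A *ᵥ y + ρ)) + t ^ 2 / 2 * (v ⬝ᵥ A *ᵥ v) := by
  simp only [quadObjective, mulVec_add, mulVec_smul, dotProduct_add, add_dotProduct,
    smul_dotProduct, dotProduct_smul, smul_eq_mul, hA.dotProduct_mulVec_comm y v,
    dotProduct_comm ρ v]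
  ring

theorem dotProduct_gradient_nonneg_of_isMinOn {A : Matrix n n ℝ} (hA : A.IsSymm)
    {ρ y v : n → ℝ} {s : Set (n → ℝ)} (hmin : IsMinOn (quadObjective A ρ) s y) {ε : ℝ}
    (hε : 0 < ε) (hseg : ∀ t ∈ Ioc 0 ε, y + t • v ∈ s) : 0 ≤ v ⬝ᵥ (A *ᵥ y + ρ) := by
  set a := v ⬝ᵥ (A *ᵥ y + ρ)
  set b := v ⬝ᵥ A *ᵥ v / 2
  have hlim : Tendsto (fun t => a + t * b) (𝓝[>] 0) (𝓝 a) := by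
    have hcont : Continuous fun t : ℝ => a + t * b := by fun_prop
    exact (hcont.tendsto' 0 a (by simp)).mono_left nhdsWithin_le_nhds
  refine ge_of_tendsto hlim ?_
  filter_upwards [Ioc_mem_nhdsGT hε] with t ht
  have hexp : t * (a + t * b) = quadObjective A ρ (y + t • v) - quadObjective A ρ y := by
    rw [quadObjective_add_smul hA]; ring
  exact nonneg_of_mul_nonneg_right (by linarith [isMinOn_iff.1 hmin _ (hseg t ht)]) ht.1

theorem gradient_nonneg_of_isMinOn_Icc {A : Matrix n n ℝ} (hA : A.IsSymm) {ρ l u y : n → ℝ}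
    (hmin : IsMinOn (quadObjective A ρ) (Icc l u) y) (hy : y ∈ Icc l u) {i : n}
    (hi : y i < u i) : 0 ≤ (A *ᵥ y + ρ) i := by
  classical
  simpa using dotProduct_gradient_nonneg_of_isMinOn hA hmin (v := Pi.single i 1) (sub_pos.2 hi)
    fun t ht => add_smul_single_mem_Icc hy (by linarith [hy.1 i, ht.1]) (by linarith [ht.2])

theorem gradient_nonpos_of_isMinOn_Icc {A : Matrix n n ℝ} (hA : A.IsSymm) {ρ l u y : n → ℝ}
    (hmin : IsMinOn (quadObjective A ρ) (Icc l u) y) (hy : y ∈ Icc l u) {i : n}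
    (hi : l i < y i) : (A *ᵥ y + ρ) i ≤ 0 := by
  classical
  have h := dotProduct_gradient_nonneg_of_isMinOn hA hmin (v := -Pi.single i 1) (sub_pos.2 hi)
    fun t ht => by
      simpa [smul_neg, ← neg_smul] using add_smul_single_mem_Icc hy (t := -t) (i := i)
        (by linarith [ht.2]) (by linarith [hy.2 i, ht.1])
  rw [neg_dotProduct, single_dotProduct, one_mul] at h
  exact neg_nonneg.1 h

theorem sub_mul_sub_le_abs_mul_abs {l x x' y y' g g' : ℝ} (hy : y ∈ Icc l x)
    (hy' : y' ∈ Icc l x') (hgu : y < x → 0 ≤ g) (hgl : l < y → g ≤ 0)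
    (hgu' : y' < x' → 0 ≤ g') (hgl' : l < y' → g' ≤ 0) :
    (y - y') * (g - g') ≤ |x - x'| * |g - g'| := by
  wlog hle : y' ≤ y generalizing x x' y y' g g'
  · have := this hy' hy hgu' hgl' hgu hgl (le_of_not_ge hle)
    rw [abs_sub_comm x, abs_sub_comm g]
    linarith
  rcases hle.lt_or_eq with hlt | rfl
  · have hg_nonpos : g ≤ 0 := hgl (hy'.1.trans_lt hlt)
    rcases hy'.2.lt_or_eq with hlt' | rfl
    · have : (y - y') * (g - g') ≤ 0 :=
        mul_nonpos_of_nonneg_of_nonpos (by linarith) (by linarith [hgu' hlt'])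
      exact this.trans (by positivity)
    · calc (y - y') * (g - g') ≤ (y - y') * |g - g'| :=
          mul_le_mul_of_nonneg_left (le_abs_self _) (by linarith)
        _ ≤ |x - y'| * |g - g'| := by
          gcongr; exact (sub_le_sub_right hy.2 _).trans (le_abs_self _)
  · simp [abs_nonneg, mul_nonneg]

theorem dotProduct_mulVec_sub_le {A : Matrix n n ℝ} (hA : A.IsSymm) {ρ l x x' y y' : n → ℝ}
    (hmin : IsMinOn (quadObjective A ρ) (Icc l x) y) (hy : y ∈ Icc l x)
    (hmin' : IsMinOn (quadObjective A ρ) (Icc l x') y') (hy' : y' ∈ Icc l x') :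
    (y - y') ⬝ᵥ A *ᵥ (y - y') ≤ ∑ i, |x i - x' i| * |(A *ᵥ (y - y')) i| := by
  have hgrad : A *ᵥ (y - y') = (A *ᵥ y + ρ) - (A *ᵥ y' + ρ) := by rw [mulVec_sub]; abel
  rw [hgrad, dotProduct]
  refine Finset.sum_le_sum fun i _ => ?_
  exact sub_mul_sub_le_abs_mul_abs ⟨hy.1 i, hy.2 i⟩ ⟨hy'.1 i, hy'.2 i⟩
    (gradient_nonneg_of_isMinOn_Icc hA hmin hy) (gradient_nonpos_of_isMinOn_Icc hA hmin hy)
    (gradient_nonneg_of_isMinOn_Icc hA hmin' hy') (gradient_nonpos_of_isMinOn_Icc hA hmin' hy')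

end BoxQP

/-- Lipschitz dependence of the box-constrained QP minimizer on the box
upper bound: there is a constant `L` (depending only on `A`, `ρ`) such that any
minimizers `y`, `y'` of `(1/2)yᵀAy + ρᵀy` over `[0,x]` and `[0,x']` respectively
satisfy `‖y − y'‖ ≤ L ‖x − x'‖`. -/
theorem stmt17 {J : ℕ} (A : Matrix (Fin J) (Fin J) ℝ) (hA : A.PosDef) (ρ : Fin J → ℝ) :
    ∃ L : ℝ, ∀ x x' y y' : Fin J → ℝ,
      (∀ i, 0 ≤ x i) → (∀ i, 0 ≤ x' i) →
      (∀ i, 0 ≤ y i ∧ y i ≤ x i) →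
      (∀ z : Fin J → ℝ, (∀ i, 0 ≤ z i ∧ z i ≤ x i) →
        (1/2) * (y ⬝ᵥ A.mulVec y) + ρ ⬝ᵥ y ≤ (1/2) * (z ⬝ᵥ A.mulVec z) + ρ ⬝ᵥ z) →
      (∀ i, 0 ≤ y' i ∧ y' i ≤ x' i) →
      (∀ z : Fin J → ℝ, (∀ i, 0 ≤ z i ∧ z i ≤ x' i) →
        (1/2) * (y' ⬝ᵥ A.mulVec y') + ρ ⬝ᵥ y' ≤ (1/2) * (z ⬝ᵥ A.mulVec z) + ρ ⬝ᵥ z) →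
      sqnorm (y - y') ≤ L * sqnorm (x - x') := by
  obtain ⟨μ, hμ, hcoercive⟩ := hA.exists_pos_mul_sqnorm_sq_le
  have hsymm : A.IsSymm := isHermitian_iff_isSymm.1 hA.isHermitian
  have mem_box {u z : Fin J → ℝ} : z ∈ Icc 0 u ↔ ∀ i, 0 ≤ z i ∧ z i ≤ u i := by
    simp [Pi.le_def, forall_and]
  set K := ‖toEuclideanCLM (𝕜 := ℝ) A‖
  refine ⟨K / μ, fun x x' y y' _ _ hy hminy hy' hminy' => ?_⟩
  set d := y - y'
  have key : μ * sqnorm d ^ 2 ≤ sqnorm (x - x') * (K * sqnorm d) :=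
    calc μ * sqnorm d ^ 2 ≤ d ⬝ᵥ A *ᵥ d := hcoercive d
      _ ≤ ∑ i, |x i - x' i| * |(A *ᵥ d) i| :=
        dotProduct_mulVec_sub_le hsymm (ρ := ρ) (fun z hz => hminy z (mem_box.1 hz))
          (mem_box.2 hy) (fun z hz => hminy' z (mem_box.1 hz)) (mem_box.2 hy')
      _ ≤ sqnorm (x - x') * sqnorm (A *ᵥ d) := sum_abs_mul_abs_le_sqnorm_mul_sqnorm _ _
      _ ≤ sqnorm (x - x') * (K * sqnorm d) :=
        mul_le_mul_of_nonneg_left (sqnorm_mulVec_le A d) (sqnorm_nonneg _)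
  rw [div_mul_eq_mul_div, le_div_iff₀ hμ]
  rcases (sqnorm_nonneg d).eq_or_lt with hzero | hpos
  · rw [← hzero, zero_mul]
    exact mul_nonneg (norm_nonneg _) (sqnorm_nonneg _)
  · nlinarith
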